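/- Suppose φ is feasible for (G, w), the weight of edge (u,v) is decreased to c yielding w', and every directed path from v to u has w_φ-length at least -(c + φ(v) - φ(u)). Then w' has no negative cycle. -/

import Mathlib

/-- Weight of a path given as a list of vertices: sum of weights of consecutive pairs. -/
def pathWeight {V : Type*} (w : V → V → ℝ) (l : List V) : ℝ :=
  ((l.zip l.tail).map fun p => w p.1 p.2).sum

/-- `l` is a directed path (walk) from `u` to `v` in the graph with edge relation `E`. -/
def IsUVPath {V : Type*} (E : V → V → Prop) (u v : V) (l : List V) : Prop :=
  l ≠ [] ∧ l.Chain' E ∧ l.head? = some u ∧ l.getLast? = some v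

/-- `l` is a directed cycle (closed walk): consecutive pairs are edges and it starts
and ends at the same vertex, traversing at least one edge. -/
def IsCycle {V : Type*} (E : V → V → Prop) (l : List V) : Prop :=
  2 ≤ l.length ∧ l.Chain' E ∧ l.head? = l.getLast?

/-- `w` is consistent with the graph `E`: no directed cycle has negative total weight. -/
def Consistent {V : Type*} (E : V → V → Prop) (w : V → V → ℝ) : Prop :=
  ∀ l, IsCycle E l → 0 ≤ pathWeight w l

/-!
Reweighting by `φ` changes no cycle weight, and makes every edge weight nonnegative except that
of `(u, v)`, which becomes `δ = c + φ v - φ u`. So a cycle avoiding `(u, v)` is nonnegative, and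
a cycle through it is `δ` plus the weight of a `v`-to-`u` walk. Cutting such a walk at its
traversals of `(u, v)` splits it into `v`-to-`u` walks avoiding the edge, each of weight at
least `-δ` by hypothesis, joined by copies of the edge, each of weight `δ`; hence the walk
weighs at least `-δ` and the cycle at least `0`.
-/

section PathWeight

variable {V : Type*} (w : V → V → ℝ)

@[simp]
theorem pathWeight_nil : pathWeight w [] = 0 := by
  simp [pathWeight]

@[simp]
theorem pathWeight_singleton (a : V) : pathWeight w [a] = 0 := by
  simp [pathWeight]

@[simp]
theorem pathWeight_cons_cons (a b : V) (l : List V) :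
    pathWeight w (a :: b :: l) = w a b + pathWeight w (b :: l) := by
  simp [pathWeight]

theorem pathWeight_append_cons (l₁ : List V) (x : V) (l₂ : List V) :
    pathWeight w (l₁ ++ x :: l₂) = pathWeight w (l₁ ++ [x]) + pathWeight w (x :: l₂) := by
  induction l₁ with
  | nil => simp
  | cons a l ih =>
    rcases l with _ | ⟨b, l⟩
    · simp
    · simp only [List.cons_append, pathWeight_cons_cons] at ih ⊢
      rw [ih]
      ring

theorem pathWeight_append_cons_cons (l₁ : List V) (a b : V) (l₂ : List V) :
    pathWeight w (l₁ ++ a :: b :: l₂) =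
      pathWeight w (l₁ ++ [a]) + w a b + pathWeight w (b :: l₂) := by
  rw [pathWeight_append_cons, pathWeight_cons_cons, add_assoc]

theorem pathWeight_append_tail {s t : List V} {x : V} (hs : s.getLast? = some x)
    (ht : t.head? = some x) : pathWeight w (s ++ t.tail) = pathWeight w s + pathWeight w t := by
  obtain ⟨s, rfl⟩ := List.getLast?_eq_some_iff.mp hs
  obtain ⟨t, rfl⟩ := List.head?_eq_some_iff.mp ht
  rw [List.tail_cons, List.append_assoc, List.singleton_append, pathWeight_append_cons]

variable {w}

theorem pathWeight_congr {w' : V → V → ℝ} {l : List V}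
    (h : l.IsChain fun a b => w a b = w' a b) : pathWeight w l = pathWeight w' l := by
  induction h with
  | nil => simp
  | singleton a => simp
  | cons_cons hab _ ih => simp [hab, ih]

theorem pathWeight_nonneg {l : List V} (h : l.IsChain fun a b => 0 ≤ w a b) :
    0 ≤ pathWeight w l := by
  induction h with
  | nil => simp
  | singleton a => simp
  | cons_cons hab _ ih => simpa using add_nonneg hab ih

variable (w)

theorem pathWeight_add_potential (φ : V → ℝ) {l : List V} {a b : V} (ha : l.head? = some a)
    (hb : l.getLast? = some b) :
    pathWeight (fun x y => w x y + φ y - φ x) l = pathWeight w l + φ b - φ a := by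
  induction l generalizing a with
  | nil => simp at ha
  | cons x l ih =>
    obtain rfl : x = a := by simpa using ha
    rcases l with _ | ⟨y, l⟩
    · obtain rfl : x = b := by simpa using hb
      simp
    · rw [List.getLast?_cons_cons] at hb
      rw [pathWeight_cons_cons, pathWeight_cons_cons, ih rfl hb]
      ring

end PathWeight

section Walks

variable {V : Type*} {E : V → V → Prop}

theorem IsUVPath.split {x y a b : V} {l₁ l₂ : List V} (h : IsUVPath E x y (l₁ ++ a :: b :: l₂)) :
    IsUVPath E x a (l₁ ++ [a]) ∧ IsUVPath E b y (b :: l₂) := by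
  obtain ⟨-, hchain, hx, hy⟩ := h
  replace hchain := List.isChain_append_cons_cons.mp hchain
  refine ⟨⟨by simp, hchain.1, ?_, by simp⟩, ⟨by simp, hchain.2.2, rfl, ?_⟩⟩
  · rcases l₁ with _ | ⟨c, l₁⟩ <;> simpa using hx
  · simpa [List.getLast?_append_cons] using hy

theorem IsUVPath.append_tail {x y z : V} {s t : List V} (hs : IsUVPath E x y s)
    (ht : IsUVPath E y z t) : IsUVPath E x z (s ++ t.tail) := by
  obtain ⟨-, hschain, hx, hy⟩ := hs
  obtain ⟨-, htchain, hy', hz⟩ := ht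
  obtain ⟨s, rfl⟩ := List.getLast?_eq_some_iff.mp hy
  obtain ⟨t, rfl⟩ := List.head?_eq_some_iff.mp hy'
  rw [List.tail_cons, List.append_assoc, List.singleton_append]
  refine ⟨by simp, List.isChain_split.mpr ⟨hschain, htchain⟩, ?_, ?_⟩
  · rcases s with _ | ⟨c, s⟩ <;> simpa using hx
  · simpa [List.getLast?_append_cons] using hz

theorem IsCycle.exists_isUVPath {l : List V} (h : IsCycle E l) : ∃ a, IsUVPath E a a l := by
  obtain ⟨hlen, hchain, hclosed⟩ := h
  rcases l with _ | ⟨a, l⟩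
  · simp at hlen
  · exact ⟨a, by simp, hchain, rfl, hclosed.symm⟩

end Walks

theorem List.isChain_or_exists_first_not_rel {α : Type*} (R : α → α → Prop) (l : List α) :
    l.IsChain R ∨ ∃ l₁ a b l₂, l = l₁ ++ a :: b :: l₂ ∧ (l₁ ++ [a]).IsChain R ∧ ¬R a b := by
  induction l with
  | nil => exact Or.inl .nil
  | cons a l ih =>
    rcases l with _ | ⟨b, l⟩
    · exact Or.inl (.singleton a)
    by_cases hab : R a b
    · rcases ih with hchain | ⟨l₁, x, y, l₂, heq, hchain, hxy⟩
      · exact Or.inl (.cons_cons hab hchain)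
      · refine Or.inr ⟨a :: l₁, x, y, l₂, by rw [heq, List.cons_append], ?_, hxy⟩
        have hhead : (l₁ ++ [x]).head? = some b := by
          rcases l₁ with _ | ⟨c, l₁⟩ <;> simp_all
        exact List.isChain_cons.mpr ⟨by simpa [hhead] using hab, hchain⟩
    · exact Or.inr ⟨[], a, b, l, rfl, .singleton a, hab⟩

def AvoidsEdge {V : Type*} (u v : V) (l : List V) : Prop :=
  l.IsChain fun a b => ¬(a = u ∧ b = v)

theorem avoidsEdge_or_eq_append {V : Type*} (u v : V) (l : List V) :
    AvoidsEdge u v l ∨ ∃ l₁ l₂, l = l₁ ++ u :: v :: l₂ ∧ AvoidsEdge u v (l₁ ++ [u]) := by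
  rcases List.isChain_or_exists_first_not_rel _ l with h | ⟨l₁, a, b, l₂, rfl, h, hab⟩
  · exact Or.inl h
  · obtain ⟨rfl, rfl⟩ := not_not.mp hab
    exact Or.inr ⟨l₁, l₂, rfl, h⟩

section NegativeCycles

variable {V : Type*} {E : V → V → Prop} {W : V → V → ℝ} {u v : V}

theorem neg_le_pathWeight_of_avoidsEdge
    (hpath : ∀ l, IsUVPath E v u l → AvoidsEdge u v l → -W u v ≤ pathWeight W l)
    (l : List V) (hl : IsUVPath E v u l) : -W u v ≤ pathWeight W l := by
  rcases avoidsEdge_or_eq_append u v l with havoid | ⟨l₁, l₂, hsplit, havoid⟩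
  · exact hpath l hl havoid
  · rw [hsplit] at hl ⊢
    obtain ⟨hfirst, hrest⟩ := hl.split
    have h₁ := hpath _ hfirst havoid
    have h₂ := neg_le_pathWeight_of_avoidsEdge hpath (v :: l₂) hrest
    rw [pathWeight_append_cons_cons]
    linarith
termination_by l.length
decreasing_by simp only [hsplit, List.length_append, List.length_cons]; omega

theorem consistent_of_avoidsEdge
    (hcycle : ∀ l, IsCycle E l → AvoidsEdge u v l → 0 ≤ pathWeight W l)
    (hpath : ∀ l, IsUVPath E v u l → AvoidsEdge u v l → -W u v ≤ pathWeight W l) :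
    Consistent E W := by
  intro l hl
  rcases avoidsEdge_or_eq_append u v l with havoid | ⟨l₁, l₂, rfl, -⟩
  · exact hcycle l hl havoid
  · -- rotate the cycle to start at `v`: it becomes a `v`-to-`u` walk followed by `(u, v)`
    obtain ⟨a, hclosed⟩ := hl.exists_isUVPath
    obtain ⟨hfirst, hrest⟩ := hclosed.split
    have hrotated := neg_le_pathWeight_of_avoidsEdge hpath _ (hrest.append_tail hfirst)
    rw [pathWeight_append_tail W hrest.2.2.2 hfirst.2.2.1] at hrotated
    rw [pathWeight_append_cons_cons]
    linarith

end NegativeCycles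

theorem consistent_add_potential_iff {V : Type*} {E : V → V → Prop} {w : V → V → ℝ}
    (φ : V → ℝ) : Consistent E (fun a b => w a b + φ b - φ a) ↔ Consistent E w := by
  refine forall₂_congr fun l hl => ?_
  obtain ⟨a, -, -, ha, ha'⟩ := hl.exists_isUVPath
  rw [pathWeight_add_potential w φ ha ha', add_sub_cancel_right]

theorem stmt18_general {V : Type*} [DecidableEq V] (E : V → V → Prop) (w : V → V → ℝ) (φ : V → ℝ)
    (hfeas : ∀ a b, E a b → 0 ≤ w a b + φ b - φ a)
    (u v : V) (c : ℝ)
    (w' : V → V → ℝ)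
    (hw' : ∀ a b, w' a b = if a = u ∧ b = v then c else w a b)
    (hpaths : ∀ l, IsUVPath E v u l →
      -(c + φ v - φ u) ≤ pathWeight (fun a b => w a b + φ b - φ a) l) :
    Consistent E w' := by
  rw [← consistent_add_potential_iff φ]
  have hagree : ∀ l, AvoidsEdge u v l →
      pathWeight (fun a b => w' a b + φ b - φ a) l = pathWeight (fun a b => w a b + φ b - φ a) l :=
    fun l hl => pathWeight_congr (hl.imp fun a b hab => by simp [hw', hab])
  refine consistent_of_avoidsEdge (u := u) (v := v) (fun l hl havoid => ?_) (fun l hl havoid => ?_)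
  · rw [hagree l havoid]
    exact pathWeight_nonneg (List.IsChain.imp (fun a b => hfeas a b) hl.2.1)
  · rw [hagree l havoid]
    simpa [hw'] using hpaths l hl

/-- If every `v`-to-`u` path has `w_φ`-length at least `-(c + φ(v) - φ(u))`, then
decreasing the weight of edge `(u,v)` to `c` creates no negative cycle. -/
theorem stmt18 {V : Type*} [DecidableEq V] (E : V → V → Prop) (w : V → V → ℝ) (φ : V → ℝ)
    (hfeas : ∀ a b, E a b → 0 ≤ w a b + φ b - φ a)
    (u v : V) (he : E u v) (c : ℝ) (hc : c ≤ w u v)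
    (w' : V → V → ℝ)
    (hw' : ∀ a b, w' a b = if a = u ∧ b = v then c else w a b)
    (hpaths : ∀ l, IsUVPath E v u l →
      -(c + φ v - φ u) ≤ pathWeight (fun a b => w a b + φ b - φ a) l) :
    Consistent E w' :=
  stmt18_general E w φ hfeas u v c w' hw' hpaths
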